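/- arXiv:1807.06402 — 3 statements merged into one kernel-verified Lean document; each statement's English description precedes it below -/
import Mathlib

section
/- Let X, Y be random vectors in ℝ² supported in [0,1]² with CDFs F₁, F₂. If F₁(s,t) ≤ F₂(s,t) for all (s,t) ∈ [0,1]², then E[φ(X)] ≥ E[φ(Y)] for every bounded continuous function φ : [0,1]² → ℝ that is monotone increasing in each coordinate and submodular (i.e., φ(a∨b) + φ(a∧b) ≤ φ(a) + φ(b) for all a, b). -/
/-!
Approximate `φ` by the staircase function `p ↦ φ (⌈n p₁⌉₊ / n, ⌈n p₂⌉₊ / n)`. Two-dimensional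
summation by parts writes it on `[0,1]²` as `φ (1, 1)` plus a combination of the lower-orthant
indicators `𝟙 {p ≤ (k/n, l/n)}` whose coefficients are mixed differences of `φ` on the grid.
Submodularity (inside the grid) and monotonicity (on its upper and right edges) make every
coefficient nonpositive, so the integral of the staircase function is a nonincreasing function of
the CDF values and is therefore at least as large under `μ` as under `ν`. Dominated convergence
passes to the limit `n → ∞`.
-/

namespace Finset

theorem eq_sum_range_ite_sub_succ {M : Type*} [AddCommGroup M] (f : ℕ → M) {N : ℕ}
    (hf : ∀ k, N ≤ k → f k = 0) (i : ℕ) :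
    f i = ∑ k ∈ range N, if i ≤ k then f k - f (k + 1) else 0 := by
  rw [← sum_filter]
  rcases le_total i N with hi | hi
  · have hfilter : (range N).filter (i ≤ ·) = Ico i N := by ext; simp [and_comm]
    simpa only [hfilter, Pi.neg_apply, neg_sub_neg, hf N le_rfl, sub_zero]
      using (sum_Ico_sub (-f) hi).symm
  · rw [hf i hi, eq_comm]
    exact sum_eq_zero fun k hk => by
      simp only [mem_filter, mem_range] at hk; omega

end Finset

def mixedDiff {M : Type*} [AddCommGroup M] (G : ℕ → ℕ → M) (k l : ℕ) : M :=
  G (k + 1) (l + 1) - G (k + 1) l - G k (l + 1) + G k l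

open Finset in
theorem eq_sum_range_ite_mixedDiff {M : Type*} [AddCommGroup M] (G : ℕ → ℕ → M) {N : ℕ}
    (hG : ∀ k l, N ≤ k ∨ N ≤ l → G k l = 0) (i j : ℕ) :
    G i j = ∑ k ∈ range N, ∑ l ∈ range N,
      if i ≤ k ∧ j ≤ l then mixedDiff G k l else 0 := by
  rw [eq_sum_range_ite_sub_succ (G · j) (fun k hk => hG k j (.inl hk)) i]
  refine sum_congr rfl fun k _ => ?_
  rw [eq_sum_range_ite_sub_succ (fun l => G k l - G (k + 1) l)
    (fun l hl => by simp [hG _ _ (.inr hl)]) j]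
  split_ifs with hik
  · refine sum_congr rfl fun l _ => ?_
    simp only [hik, true_and, mixedDiff]
    congr 1; abel
  · simp [hik]

open Set MeasureTheory Filter Topology

theorem natCast_div_mem_Icc {k n : ℕ} (hk : k ≤ n) : (k : ℝ) / n ∈ Icc (0 : ℝ) 1 :=
  ⟨by positivity, div_le_one_of_le₀ (by exact_mod_cast hk) (by positivity)⟩

section GridApprox

variable (φ : ℝ × ℝ → ℝ) (n : ℕ)

/-- Shifted to vanish at the corner `(1, 1)` and extended by zero beyond the grid, so that all
mixed differences on `{0, …, n}²` are `≤ 0` (on the last row and column they are differences of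
`φ` along the edges `x = 1` and `y = 1`). -/
noncomputable def gridValue (k l : ℕ) : ℝ :=
  if k ≤ n ∧ l ≤ n then φ ((k : ℝ) / n, (l : ℝ) / n) - φ (1, 1) else 0

noncomputable def gridApprox (p : ℝ × ℝ) : ℝ :=
  φ (1, 1) + ∑ k ∈ Finset.range (n + 1), ∑ l ∈ Finset.range (n + 1),
    mixedDiff (gridValue φ n) k l * (Iic ((k : ℝ) / n, (l : ℝ) / n)).indicator 1 p

theorem measurable_gridApprox : Measurable (gridApprox φ n) :=
  measurable_const.add <| Finset.measurable_sum _ fun _ _ => Finset.measurable_sum _ fun _ _ =>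
    (measurable_const.indicator measurableSet_Iic).const_mul _

theorem integral_gridApprox (μ : Measure (ℝ × ℝ)) [IsProbabilityMeasure μ] :
    ∫ p, gridApprox φ n p ∂μ = φ (1, 1) + ∑ k ∈ Finset.range (n + 1), ∑ l ∈ Finset.range (n + 1),
      mixedDiff (gridValue φ n) k l * μ.real (Iic ((k : ℝ) / n, (l : ℝ) / n)) := by
  have hind : ∀ (c : ℝ) (q : ℝ × ℝ), Integrable (fun p => c * (Iic q).indicator 1 p) μ :=
    fun c q => ((integrable_const 1).indicator measurableSet_Iic).const_mul c
  simp only [gridApprox]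
  rw [integral_add (integrable_const _)
    (integrable_finsetSum _ fun _ _ => integrable_finsetSum _ fun _ _ => hind _ _),
    integral_finsetSum _ fun _ _ => integrable_finsetSum _ fun _ _ => hind _ _]
  simp only [integral_finsetSum _ fun _ _ => hind _ _, integral_const_mul,
    integral_indicator_one measurableSet_Iic, integral_const, probReal_univ, one_smul]

variable {n}

theorem indicator_Iic_natCast_div (hn : 0 < n) (p : ℝ × ℝ) (k l : ℕ) :
    (Iic ((k : ℝ) / n, (l : ℝ) / n)).indicator (1 : ℝ × ℝ → ℝ) p =
      if ⌈p.1 * n⌉₊ ≤ k ∧ ⌈p.2 * n⌉₊ ≤ l then 1 else 0 := by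
  have hn' : (0 : ℝ) < n := by exact_mod_cast hn
  simp [Set.indicator_apply, Prod.le_def, Nat.ceil_le, le_div_iff₀ hn']

theorem gridApprox_eq (hn : 0 < n) {p : ℝ × ℝ} (hp : p ≤ (1, 1)) :
    gridApprox φ n p = φ (⌈p.1 * n⌉₊ / n, ⌈p.2 * n⌉₊ / n) := by
  have hceil : ∀ x : ℝ, x ≤ 1 → ⌈x * n⌉₊ ≤ n := fun x hx =>
    Nat.ceil_le.2 (mul_le_of_le_one_left (Nat.cast_nonneg n) hx)
  have hvanish : ∀ k l, n + 1 ≤ k ∨ n + 1 ≤ l → gridValue φ n k l = 0 := fun k l h => by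
    rw [gridValue, if_neg (by omega)]
  simp only [gridApprox, indicator_Iic_natCast_div hn, mul_ite, mul_one, mul_zero]
  rw [← eq_sum_range_ite_mixedDiff _ hvanish, gridValue, if_pos ⟨hceil _ hp.1, hceil _ hp.2⟩]
  ring

variable {φ}

theorem mixedDiff_gridValue_nonpos (hm₁ : ∀ y : ℝ, Monotone fun x : ℝ => φ (x, y))
    (hm₂ : ∀ x : ℝ, Monotone fun y : ℝ => φ (x, y))
    (hsub : ∀ a b : ℝ × ℝ, φ (a ⊔ b) + φ (a ⊓ b) ≤ φ a + φ b)
    (hn : 0 < n) {k l : ℕ} (hk : k ≤ n) (hl : l ≤ n) :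
    mixedDiff (gridValue φ n) k l ≤ 0 := by
  have hstep : ∀ k : ℕ, (k : ℝ) / n ≤ ((k + 1 : ℕ) : ℝ) / n := fun k => by
    gcongr; exact_mod_cast k.le_succ
  have hone : (n : ℝ) / n = 1 := div_self (by exact_mod_cast hn.ne')
  rcases hk.lt_or_eq with hk | rfl <;> rcases hl.lt_or_eq with hl | rfl
  · have h := hsub ((k : ℝ) / n, ((l + 1 : ℕ) : ℝ) / n) (((k + 1 : ℕ) : ℝ) / n, (l : ℝ) / n)
    simp only [Prod.mk_sup_mk, Prod.mk_inf_mk, sup_of_le_right (hstep k),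
      sup_of_le_left (hstep l), inf_of_le_left (hstep k), inf_of_le_right (hstep l)] at h
    have hk' : k + 1 ≤ n := hk
    have hl' : l + 1 ≤ n := hl
    simp only [mixedDiff, gridValue, hk', hl', hk.le, hl.le, and_self, if_true]
    linarith
  · have h := hm₁ 1 (hstep k)
    simp [mixedDiff, gridValue, hk, hk.le, hone] at h ⊢
    linarith
  · have h := hm₂ 1 (hstep l)
    simp [mixedDiff, gridValue, hl, hl.le, hone] at h ⊢
    linarith
  · simp [mixedDiff, gridValue, hone]

theorem integral_gridApprox_le (μ ν : Measure (ℝ × ℝ)) [IsProbabilityMeasure μ]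
    [IsProbabilityMeasure ν]
    (hle : ∀ s ∈ Icc (0 : ℝ) 1, ∀ t ∈ Icc (0 : ℝ) 1, μ.real (Iic (s, t)) ≤ ν.real (Iic (s, t)))
    (hm₁ : ∀ y : ℝ, Monotone fun x : ℝ => φ (x, y))
    (hm₂ : ∀ x : ℝ, Monotone fun y : ℝ => φ (x, y))
    (hsub : ∀ a b : ℝ × ℝ, φ (a ⊔ b) + φ (a ⊓ b) ≤ φ a + φ b) (hn : 0 < n) :
    ∫ p, gridApprox φ n p ∂ν ≤ ∫ p, gridApprox φ n p ∂μ := by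
  rw [integral_gridApprox, integral_gridApprox]
  refine (add_le_add_iff_left _).2 <|
    Finset.sum_le_sum fun k hk => Finset.sum_le_sum fun l hl => ?_
  have hk : k ≤ n := Nat.lt_succ_iff.1 (Finset.mem_range.1 hk)
  have hl : l ≤ n := Nat.lt_succ_iff.1 (Finset.mem_range.1 hl)
  exact mul_le_mul_of_nonpos_left (hle _ (natCast_div_mem_Icc hk) _ (natCast_div_mem_Icc hl))
    (mixedDiff_gridValue_nonpos hm₁ hm₂ hsub hn hk hl)

theorem tendsto_gridApprox (hc : Continuous φ) {p : ℝ × ℝ} (hp : p ∈ Icc (0, 0) (1, 1)) :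
    Tendsto (fun n => gridApprox φ n p) atTop (𝓝 (φ p)) := by
  have hceil : ∀ x : ℝ, 0 ≤ x → Tendsto (fun n : ℕ => (⌈x * n⌉₊ : ℝ) / n) atTop (𝓝 x) :=
    fun x hx => (tendsto_nat_ceil_mul_div_atTop hx).comp tendsto_natCast_atTop_atTop
  refine ((hc.tendsto p).comp ((hceil _ hp.1.1).prodMk_nhds (hceil _ hp.1.2))).congr' ?_
  exact (eventually_gt_atTop 0).mono fun n hn => (gridApprox_eq φ hn hp.2).symm

theorem tendsto_integral_gridApprox (μ : Measure (ℝ × ℝ)) [IsFiniteMeasure μ]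
    (hs : μ (Icc ((0, 0) : ℝ × ℝ) (1, 1))ᶜ = 0) (hc : Continuous φ)
    (hb : ∃ C : ℝ, ∀ p, |φ p| ≤ C) :
    Tendsto (fun n => ∫ p, gridApprox φ n p ∂μ) atTop (𝓝 (∫ p, φ p ∂μ)) := by
  obtain ⟨C, hC⟩ := hb
  have hK : ∀ᵐ p ∂μ, p ∈ Icc ((0, 0) : ℝ × ℝ) (1, 1) := ae_iff.2 hs
  refine tendsto_integral_filter_of_dominated_convergence (fun _ => C)
    (.of_forall fun n => (measurable_gridApprox φ n).aestronglyMeasurable) ?_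
    (integrable_const C) (hK.mono fun p hp => tendsto_gridApprox hc hp)
  exact (eventually_gt_atTop 0).mono fun n hn => hK.mono fun p hp => by
    rw [gridApprox_eq φ hn hp.2]; exact hC _

end GridApprox

theorem first_order_dominance_submodular_general
    (μ ν : Measure (ℝ × ℝ)) [IsProbabilityMeasure μ] [IsProbabilityMeasure ν]
    (hsμ : μ (Icc ((0, 0) : ℝ × ℝ) (1, 1))ᶜ = 0)
    (hsν : ν (Icc ((0, 0) : ℝ × ℝ) (1, 1))ᶜ = 0)
    (hle : ∀ s ∈ Icc (0 : ℝ) 1, ∀ t ∈ Icc (0 : ℝ) 1,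
      (μ (Iic ((s, t) : ℝ × ℝ))).toReal ≤ (ν (Iic ((s, t) : ℝ × ℝ))).toReal)
    (φ : ℝ × ℝ → ℝ) (hc : Continuous φ) (hb : ∃ C : ℝ, ∀ p, |φ p| ≤ C)
    (hm₁ : ∀ y : ℝ, Monotone fun x : ℝ => φ (x, y))
    (hm₂ : ∀ x : ℝ, Monotone fun y : ℝ => φ (x, y))
    (hsub : ∀ a b : ℝ × ℝ, φ (a ⊔ b) + φ (a ⊓ b) ≤ φ a + φ b) :
    ∫ p, φ p ∂μ ≥ ∫ p, φ p ∂ν :=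
  le_of_tendsto_of_tendsto (tendsto_integral_gridApprox ν hsν hc hb)
    (tendsto_integral_gridApprox μ hsμ hc hb)
    ((eventually_gt_atTop 0).mono fun _ hn => integral_gridApprox_le μ ν hle hm₁ hm₂ hsub hn)
end

section
/- Let X = (X₁,Y₁) and W = (X₂,Y₂) be random vectors supported in [0,1]² with joint CDFs F₁, F₂ and marginal CDFs F₁^X, F₁^Y, F₂^X, F₂^Y. Define Kₖ(s,t) = Fₖ^X(s) + Fₖ^Y(t) - Fₖ(s,t). If F₁^X ≤ F₂^X pointwise, F₁^Y ≤ F₂^Y pointwise, and K₁(s,t) ≤ K₂(s,t) for all (s,t), then E[φ(X)] ≥ E[φ(W)] for every bounded continuous φ increasing in each coordinate and supermodular (φ(a∨b) + φ(a∧b) ≥ φ(a) + φ(b)). -/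
/-!
Round both coordinates up to the grid `(1/n)ℕ`, capped at `1`. By two-dimensional telescoping,
`φ ∘ gridRound n` is `φ (0, 0)` plus a combination of indicators of the upper sets `{s < x}`,
`{t < y}` and `{s < x, t < y}`, whose weights are increments of `φ` along the axes (nonnegative by
monotonicity) and mixed second differences (nonnegative by supermodularity). The hypotheses say
precisely that `μ` gives each of these upper sets at least the mass `ν` gives it: the upper orthant
is the complement of the L-shaped region of mass `K (s, t)`. Hence the inequality holds for
`φ ∘ gridRound n`, and dominated convergence passes to `φ`, because `gridRound n p → p` on `[0,1]²`.
-/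

open Set MeasureTheory Filter Topology

noncomputable def gridIndex (n : ℕ) (x : ℝ) : ℕ := min ⌈n * x⌉₊ n

noncomputable def gridPoint (n i : ℕ) : ℝ := i / n

noncomputable def gridRound (n : ℕ) (p : ℝ × ℝ) : ℝ × ℝ :=
  (gridPoint n (gridIndex n p.1), gridPoint n (gridIndex n p.2))

lemma gridIndex_le (n : ℕ) (x : ℝ) : gridIndex n x ≤ n := min_le_right _ _

lemma lt_gridIndex_iff {n i : ℕ} (hi : i < n) {x : ℝ} : i < gridIndex n x ↔ gridPoint n i < x := by
  have hn : (0 : ℝ) < n := by exact_mod_cast (Nat.zero_le i).trans_lt hi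
  rw [gridIndex, gridPoint, lt_min_iff, Nat.lt_ceil, div_lt_iff₀ hn, mul_comm]
  exact and_iff_left hi

lemma gridPoint_zero (n : ℕ) : gridPoint n 0 = 0 := by simp [gridPoint]

lemma gridPoint_le_succ (n i : ℕ) : gridPoint n i ≤ gridPoint n (i + 1) := by
  unfold gridPoint
  gcongr
  exact_mod_cast Nat.le_succ i

lemma tendsto_gridPoint_gridIndex {x : ℝ} (h₀ : 0 ≤ x) (h₁ : x ≤ 1) :
    Tendsto (fun n => gridPoint n (gridIndex n x)) atTop (𝓝 x) := by
  have hupper : Tendsto (fun n : ℕ => x + 1 / (n : ℝ)) atTop (𝓝 x) := by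
    simpa using (tendsto_const_nhds (x := x)).add tendsto_one_div_atTop_nhds_zero_nat
  refine tendsto_of_tendsto_of_tendsto_of_le_of_le' tendsto_const_nhds hupper ?_ ?_ <;>
    filter_upwards [eventually_gt_atTop 0] with n hn <;>
    have hn' : (0 : ℝ) < n := by exact_mod_cast hn
  · rw [gridPoint, le_div_iff₀ hn', gridIndex, Nat.cast_min]
    exact le_min (by linarith [Nat.le_ceil ((n : ℝ) * x)]) (by nlinarith)
  · rw [gridPoint, div_le_iff₀ hn', add_mul, one_div_mul_cancel hn'.ne', mul_comm]
    exact (Nat.cast_le.2 (min_le_left _ _)).trans (Nat.ceil_lt_add_one (by positivity)).le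

lemma tendsto_gridRound {p : ℝ × ℝ} (hp : p ∈ Icc (0, 0) (1, 1)) :
    Tendsto (fun n => gridRound n p) atTop (𝓝 p) :=
  (tendsto_gridPoint_gridIndex hp.1.1 hp.2.1).prodMk_nhds
    (tendsto_gridPoint_gridIndex hp.1.2 hp.2.2)

lemma measurable_gridRound (n : ℕ) : Measurable (gridRound n) := by
  unfold gridRound gridPoint gridIndex
  fun_prop

section Telescope

open Finset

variable {M : Type*} [AddCommGroup M]

lemma sum_range_ite_lt_sub (a : ℕ → M) {k n : ℕ} (hk : k ≤ n) :
    ∑ i ∈ range n, (if i < k then a (i + 1) - a i else 0) = a k - a 0 := by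
  rw [← sum_filter, show (range n).filter (· < k) = range k by ext; simp; omega, sum_range_sub]

lemma grid_telescope (f : ℕ → ℕ → M) {k l n : ℕ} (hk : k ≤ n) (hl : l ≤ n) :
    f k l = f 0 0 + ∑ i ∈ range n, (if i < k then f (i + 1) 0 - f i 0 else 0)
      + ∑ j ∈ range n, (if j < l then f 0 (j + 1) - f 0 j else 0)
      + ∑ i ∈ range n, ∑ j ∈ range n, (if i < k ∧ j < l then
          f (i + 1) (j + 1) - f i (j + 1) - (f (i + 1) j - f i j) else 0) := by
  have inner : ∀ i, ∑ j ∈ range n, (if i < k ∧ j < l then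
      f (i + 1) (j + 1) - f i (j + 1) - (f (i + 1) j - f i j) else 0) =
      if i < k then (f (i + 1) l - f (i + 1) 0) - (f i l - f i 0) else 0 := by
    intro i
    split_ifs with hi
    · simp only [hi, true_and]
      rw [sum_range_ite_lt_sub (fun j => f (i + 1) j - f i j) hl]
      abel
    · simp [hi]
  simp only [inner]
  rw [sum_range_ite_lt_sub (fun i => f i l - f i 0) hk, sum_range_ite_lt_sub (fun i => f i 0) hk,
    sum_range_ite_lt_sub (f 0) hl]
  abel

end Telescope

lemma mixed_difference_nonneg {α β M : Type*} [Lattice α] [Lattice β] [AddCommGroup M]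
    [PartialOrder M] [IsOrderedAddMonoid M] {φ : α × β → M}
    (hφ : ∀ a b, φ (a ⊔ b) + φ (a ⊓ b) ≥ φ a + φ b)
    {x x' : α} {y y' : β} (hx : x ≤ x') (hy : y ≤ y') :
    0 ≤ φ (x', y') - φ (x, y') - (φ (x', y) - φ (x, y)) := by
  have h := hφ (x', y) (x, y')
  simp only [Prod.mk_sup_mk, Prod.mk_inf_mk, sup_eq_left.2 hx, sup_eq_right.2 hy,
    inf_eq_right.2 hx, inf_eq_left.2 hy] at h
  rw [show φ (x', y') - φ (x, y') - (φ (x', y) - φ (x, y))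
      = φ (x', y') + φ (x, y) - (φ (x', y) + φ (x, y')) by abel, sub_nonneg]
  exact h

open Finset in
lemma comp_gridRound_eq (φ : ℝ × ℝ → ℝ) (n : ℕ) (p : ℝ × ℝ) :
    φ (gridRound n p) = φ (0, 0)
      + (∑ i ∈ range n, {q : ℝ × ℝ | gridPoint n i < q.1}.indicator
          (fun _ => φ (gridPoint n (i + 1), 0) - φ (gridPoint n i, 0)) p
      + ∑ j ∈ range n, {q : ℝ × ℝ | gridPoint n j < q.2}.indicator
          (fun _ => φ (0, gridPoint n (j + 1)) - φ (0, gridPoint n j)) p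
      + ∑ ij ∈ range n ×ˢ range n,
          ({q : ℝ × ℝ | gridPoint n ij.1 < q.1} ∩ {q | gridPoint n ij.2 < q.2}).indicator
            (fun _ => φ (gridPoint n (ij.1 + 1), gridPoint n (ij.2 + 1))
              - φ (gridPoint n ij.1, gridPoint n (ij.2 + 1))
              - (φ (gridPoint n (ij.1 + 1), gridPoint n ij.2)
                - φ (gridPoint n ij.1, gridPoint n ij.2))) p) := by
  have hlt : ∀ {i : ℕ} {x : ℝ}, i ∈ range n → (i < gridIndex n x ↔ gridPoint n i < x) :=
    fun hi => lt_gridIndex_iff (mem_range.1 hi)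
  rw [gridRound, grid_telescope (fun i j => φ (gridPoint n i, gridPoint n j))
    (gridIndex_le n p.1) (gridIndex_le n p.2), sum_product]
  simp +contextual only [indicator_apply, mem_ofPred_eq, mem_inter_iff, hlt, gridPoint_zero,
    add_assoc]

section IndicatorSums

variable {α ι : Type*} [MeasurableSpace α] {μ ν : Measure α} {s : Finset ι} {U : ι → Set α}

lemma integrable_sum_indicator_const [IsFiniteMeasure μ] (hU : ∀ i ∈ s, MeasurableSet (U i))
    (w : ι → ℝ) : Integrable (fun p => ∑ i ∈ s, (U i).indicator (fun _ => w i) p) μ :=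
  integrable_finsetSum _ fun i hi => (integrable_const _).indicator (hU i hi)

lemma integral_sum_indicator_const [IsFiniteMeasure μ] (hU : ∀ i ∈ s, MeasurableSet (U i))
    (w : ι → ℝ) :
    ∫ p, ∑ i ∈ s, (U i).indicator (fun _ => w i) p ∂μ = ∑ i ∈ s, μ.real (U i) * w i := by
  rw [integral_finsetSum _ fun i hi => (integrable_const _).indicator (hU i hi)]
  refine Finset.sum_congr rfl fun i hi => ?_
  rw [integral_indicator_const _ (hU i hi), smul_eq_mul]

lemma integral_sum_indicator_const_le [IsFiniteMeasure μ] [IsFiniteMeasure ν]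
    (hU : ∀ i ∈ s, MeasurableSet (U i)) {w : ι → ℝ} (hw : ∀ i ∈ s, 0 ≤ w i)
    (hνμ : ∀ i ∈ s, ν.real (U i) ≤ μ.real (U i)) :
    ∫ p, ∑ i ∈ s, (U i).indicator (fun _ => w i) p ∂ν
      ≤ ∫ p, ∑ i ∈ s, (U i).indicator (fun _ => w i) p ∂μ := by
  rw [integral_sum_indicator_const hU, integral_sum_indicator_const hU]
  exact Finset.sum_le_sum fun i hi => mul_le_mul_of_nonneg_right (hνμ i hi) (hw i hi)

end IndicatorSums

section Survival

variable {α : Type*} [MeasurableSpace α] {μ ν : Measure α} [IsProbabilityMeasure μ]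
  [IsProbabilityMeasure ν] {A B : Set α}

lemma measureReal_compl_le_of_le (hA : MeasurableSet A) (h : μ.real A ≤ ν.real A) :
    ν.real Aᶜ ≤ μ.real Aᶜ := by
  rw [probReal_compl_eq_one_sub hA, probReal_compl_eq_one_sub hA]
  linarith

lemma measureReal_compl_union_le_of_le (hA : MeasurableSet A) (hB : MeasurableSet B)
    (h : μ.real A + μ.real B - μ.real (A ∩ B) ≤ ν.real A + ν.real B - ν.real (A ∩ B)) :
    ν.real (A ∪ B)ᶜ ≤ μ.real (A ∪ B)ᶜ := by
  refine measureReal_compl_le_of_le (hA.union hB) ?_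
  have hμ := measureReal_union_add_inter (μ := μ) (s := A) hB
  have hν := measureReal_union_add_inter (μ := ν) (s := A) hB
  linarith

end Survival

lemma integral_comp_gridRound_le {μ ν : Measure (ℝ × ℝ)} [IsProbabilityMeasure μ]
    [IsProbabilityMeasure ν]
    (h₁ : ∀ s : ℝ, ν.real {p | s < p.1} ≤ μ.real {p | s < p.1})
    (h₂ : ∀ t : ℝ, ν.real {p | t < p.2} ≤ μ.real {p | t < p.2})
    (h₁₂ : ∀ s t : ℝ, ν.real ({p | s < p.1} ∩ {p | t < p.2})
      ≤ μ.real ({p | s < p.1} ∩ {p | t < p.2}))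
    {φ : ℝ × ℝ → ℝ} (hφ₁ : Monotone fun x => φ (x, 0)) (hφ₂ : Monotone fun y => φ (0, y))
    (hφ : ∀ a b, φ (a ⊔ b) + φ (a ⊓ b) ≥ φ a + φ b) (n : ℕ) :
    ∫ p, φ (gridRound n p) ∂ν ≤ ∫ p, φ (gridRound n p) ∂μ := by
  have hA (i : ℕ) : MeasurableSet {q : ℝ × ℝ | gridPoint n i < q.1} :=
    measurable_fst measurableSet_Ioi
  have hB (j : ℕ) : MeasurableSet {q : ℝ × ℝ | gridPoint n j < q.2} :=
    measurable_snd measurableSet_Ioi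
  have hAB (ij : ℕ × ℕ) : MeasurableSet
      ({q : ℝ × ℝ | gridPoint n ij.1 < q.1} ∩ {q | gridPoint n ij.2 < q.2}) :=
    (hA _).inter (hB _)
  simp only [comp_gridRound_eq φ n]
  rw [integral_add, integral_add, integral_add, integral_add, integral_add, integral_add,
    integral_const, integral_const, probReal_univ, probReal_univ]
  · gcongr _ + (?_ + ?_ + ?_)
    · exact integral_sum_indicator_const_le (fun i _ => hA i)
        (fun i _ => sub_nonneg.2 (hφ₁ (gridPoint_le_succ n i))) (fun i _ => h₁ _)
    · exact integral_sum_indicator_const_le (fun j _ => hB j)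
        (fun j _ => sub_nonneg.2 (hφ₂ (gridPoint_le_succ n j))) (fun j _ => h₂ _)
    · exact integral_sum_indicator_const_le (fun ij _ => hAB ij)
        (fun ij _ => mixed_difference_nonneg hφ (gridPoint_le_succ n _) (gridPoint_le_succ n _))
        (fun ij _ => h₁₂ _ _)
  all_goals repeat' first
    | exact integrable_const _
    | apply Integrable.add
    | exact integrable_sum_indicator_const (fun i _ => hA i) _
    | exact integrable_sum_indicator_const (fun j _ => hB j) _
    | exact integrable_sum_indicator_const (fun ij _ => hAB ij) _

lemma tendsto_integral_comp_gridRound {κ : Measure (ℝ × ℝ)} [IsFiniteMeasure κ]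
    (hκ : κ (Icc (0, 0) (1, 1))ᶜ = 0) {φ : ℝ × ℝ → ℝ} (hc : Continuous φ) {C : ℝ}
    (hC : ∀ p, |φ p| ≤ C) :
    Tendsto (fun n => ∫ p, φ (gridRound n p) ∂κ) atTop (𝓝 (∫ p, φ p ∂κ)) :=
  tendsto_integral_of_dominated_convergence (fun _ => C)
    (fun n => (hc.measurable.comp (measurable_gridRound n)).aestronglyMeasurable)
    (integrable_const C) (fun n => ae_of_all _ fun p => hC _)
    (by filter_upwards [mem_ae_iff.2 hκ] with p hp using
      (hc.tendsto p).comp (tendsto_gridRound hp))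

theorem first_order_dominance_supermodular_general
    (μ ν : Measure (ℝ × ℝ)) [IsProbabilityMeasure μ] [IsProbabilityMeasure ν]
    (hsμ : μ (Icc ((0, 0) : ℝ × ℝ) (1, 1))ᶜ = 0)
    (hsν : ν (Icc ((0, 0) : ℝ × ℝ) (1, 1))ᶜ = 0)
    (hX : ∀ s : ℝ, (μ {p : ℝ × ℝ | p.1 ≤ s}).toReal ≤ (ν {p : ℝ × ℝ | p.1 ≤ s}).toReal)
    (hY : ∀ t : ℝ, (μ {p : ℝ × ℝ | p.2 ≤ t}).toReal ≤ (ν {p : ℝ × ℝ | p.2 ≤ t}).toReal)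
    (hK : ∀ s t : ℝ,
      (μ {p : ℝ × ℝ | p.1 ≤ s}).toReal + (μ {p : ℝ × ℝ | p.2 ≤ t}).toReal
          - (μ (Iic ((s, t) : ℝ × ℝ))).toReal
        ≤ (ν {p : ℝ × ℝ | p.1 ≤ s}).toReal + (ν {p : ℝ × ℝ | p.2 ≤ t}).toReal
          - (ν (Iic ((s, t) : ℝ × ℝ))).toReal)
    (φ : ℝ × ℝ → ℝ) (hc : Continuous φ) (hb : ∃ C : ℝ, ∀ p, |φ p| ≤ C)
    (hm₁ : ∀ y : ℝ, Monotone fun x : ℝ => φ (x, y))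
    (hm₂ : ∀ x : ℝ, Monotone fun y : ℝ => φ (x, y))
    (hsuper : ∀ a b : ℝ × ℝ, φ (a ⊔ b) + φ (a ⊓ b) ≥ φ a + φ b) :
    ∫ p, φ p ∂μ ≥ ∫ p, φ p ∂ν := by
  have hA (s : ℝ) : MeasurableSet {p : ℝ × ℝ | p.1 ≤ s} := measurable_fst measurableSet_Iic
  have hB (t : ℝ) : MeasurableSet {p : ℝ × ℝ | p.2 ≤ t} := measurable_snd measurableSet_Iic
  have h₁ (s : ℝ) : ν.real {p | s < p.1} ≤ μ.real {p | s < p.1} := by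
    simpa only [compl_ofPred, not_le] using measureReal_compl_le_of_le (hA s) (hX s)
  have h₂ (t : ℝ) : ν.real {p | t < p.2} ≤ μ.real {p | t < p.2} := by
    simpa only [compl_ofPred, not_le] using measureReal_compl_le_of_le (hB t) (hY t)
  -- `Iic (s, t)` is `{p.1 ≤ s} ∩ {p.2 ≤ t}` definitionally, so `hK` applies as it stands.
  have h₁₂ (s t : ℝ) : ν.real ({p | s < p.1} ∩ {p | t < p.2})
      ≤ μ.real ({p | s < p.1} ∩ {p | t < p.2}) := by
    simpa only [compl_union, compl_ofPred, not_le] using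
      measureReal_compl_union_le_of_le (hA s) (hB t) (hK s t)
  obtain ⟨C, hC⟩ := hb
  exact le_of_tendsto_of_tendsto' (tendsto_integral_comp_gridRound hsν hc hC)
    (tendsto_integral_comp_gridRound hsμ hc hC)
    (integral_comp_gridRound_le h₁ h₂ h₁₂ (hm₁ 0) (hm₂ 0) hsuper)
end

section
/- Let F₁, F₂ be C¹ CDFs of absolutely continuous probability distributions on [0,1]² with F₁(s,t) ≤ F₂(s,t) everywhere. Then for every C² function φ on [0,1]² with φ_x ≥ 0, φ_y ≥ 0, and φ_{xy} ≤ 0, we have E₁[φ] ≥ E₂[φ]. -/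
/-!
Writing `φ` through its values at the corner `b = (1, 1)` by the fundamental theorem of calculus,
`φ(x, y) = φ(b) - ∫ₓ¹ ∂₁φ(s, 1) ds - ∫ᵧ¹ ∂₂φ(1, t) dt + ∫ₓ¹∫ᵧ¹ ∂₁₂φ(s, t) dt ds`,
and integrating against a distribution on the square, Fubini turns each indicator `x ≤ s`, `y ≤ t`
into the CDF: `E[φ] = φ(b) - ∫ F(s, 1) ∂₁φ(s, 1) - ∫ F(1, t) ∂₂φ(1, t) + ∬ F ∂₁₂φ`.
With `∂₁φ, ∂₂φ ≥ 0 ≥ ∂₁₂φ`, each term moves in the right direction when `F₁ ≤ F₂`.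
-/

open Set MeasureTheory

noncomputable section

def partialFst (f : ℝ × ℝ → ℝ) (p : ℝ × ℝ) : ℝ := fderiv ℝ f p (1, 0)

def partialSnd (f : ℝ × ℝ → ℝ) (p : ℝ × ℝ) : ℝ := fderiv ℝ f p (0, 1)

end

section PartialDerivatives

variable {f : ℝ × ℝ → ℝ}

theorem hasDerivAt_partialFst {s t : ℝ} (hf : DifferentiableAt ℝ f (s, t)) :
    HasDerivAt (fun s' => f (s', t)) (partialFst f (s, t)) s :=
  hf.hasFDerivAt.comp_hasDerivAt s ((hasDerivAt_id s).prodMk (hasDerivAt_const s t))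

theorem hasDerivAt_partialSnd {s t : ℝ} (hf : DifferentiableAt ℝ f (s, t)) :
    HasDerivAt (fun t' => f (s, t')) (partialSnd f (s, t)) t :=
  hf.hasFDerivAt.comp_hasDerivAt t ((hasDerivAt_const t s).prodMk (hasDerivAt_id t))

theorem partialFst_eq_deriv {s t : ℝ} (hf : DifferentiableAt ℝ f (s, t)) :
    partialFst f (s, t) = deriv (fun s' => f (s', t)) s :=
  (hasDerivAt_partialFst hf).deriv.symm

theorem partialSnd_eq_deriv {s t : ℝ} (hf : DifferentiableAt ℝ f (s, t)) :
    partialSnd f (s, t) = deriv (fun t' => f (s, t')) t :=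
  (hasDerivAt_partialSnd hf).deriv.symm

theorem ContDiff.partialFst {n : WithTop ℕ∞} (hf : ContDiff ℝ (n + 1) f) :
    ContDiff ℝ n (partialFst f) :=
  (hf.fderiv_right le_rfl).clm_apply contDiff_const

theorem ContDiff.partialSnd {n : WithTop ℕ∞} (hf : ContDiff ℝ (n + 1) f) :
    ContDiff ℝ n (partialSnd f) :=
  (hf.fderiv_right le_rfl).clm_apply contDiff_const

theorem partialSnd_partialFst_eq_deriv_deriv (hf : ContDiff ℝ 2 f) (s t : ℝ) :
    partialSnd (partialFst f) (s, t) = deriv (fun t' => deriv (fun s' => f (s', t')) s) t := by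
  have hslice : (fun t' => deriv (fun s' => f (s', t')) s) = fun t' => partialFst f (s, t') :=
    funext fun _ => (partialFst_eq_deriv (hf.differentiable two_ne_zero _)).symm
  rw [hslice]
  exact partialSnd_eq_deriv ((hf.partialFst (n := 1)).differentiable one_ne_zero _)

theorem integral_partialFst (hf : ContDiff ℝ 1 f) (x y t : ℝ) :
    ∫ s in x..y, partialFst f (s, t) = f (y, t) - f (x, t) :=
  intervalIntegral.integral_eq_sub_of_hasDerivAt
    (fun _ _ => hasDerivAt_partialFst (hf.differentiable one_ne_zero _))
    ((hf.partialFst (n := 0)).continuous.comp (continuous_id.prodMk continuous_const)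
      |>.intervalIntegrable x y)

theorem integral_partialSnd (hf : ContDiff ℝ 1 f) (s x y : ℝ) :
    ∫ t in x..y, partialSnd f (s, t) = f (s, y) - f (s, x) :=
  intervalIntegral.integral_eq_sub_of_hasDerivAt
    (fun _ _ => hasDerivAt_partialSnd (hf.differentiable one_ne_zero _))
    ((hf.partialSnd (n := 0)).continuous.comp (continuous_const.prodMk continuous_id)
      |>.intervalIntegrable x y)

theorem apply_eq_corner_sub_integral_partials (hf : ContDiff ℝ 2 f) (p b : ℝ × ℝ) :
    f p = f b - (∫ s in p.1..b.1, partialFst f (s, b.2)) - (∫ t in p.2..b.2, partialSnd f (b.1, t))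
      + ∫ s in p.1..b.1, ∫ t in p.2..b.2, partialSnd (partialFst f) (s, t) := by
  have hinner (s : ℝ) : ∫ t in p.2..b.2, partialSnd (partialFst f) (s, t)
      = partialFst f (s, b.2) - partialFst f (s, p.2) :=
    integral_partialSnd (hf.partialFst (n := 1)) s p.2 b.2
  have hinner_cont : Continuous fun s => ∫ t in p.2..b.2, partialSnd (partialFst f) (s, t) :=
    intervalIntegral.continuous_parametric_intervalIntegral_of_continuous'
      (f := fun s t => partialSnd (partialFst f) (s, t))
      ((hf.partialFst (n := 1)).partialSnd (n := 0)).continuous _ _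
  have hedge_cont : Continuous fun s => partialFst f (s, b.2) :=
    (hf.partialFst (n := 1)).continuous.comp (continuous_id.prodMk continuous_const)
  have hrow_split : ∫ s in p.1..b.1, partialFst f (s, p.2)
      = (∫ s in p.1..b.1, partialFst f (s, b.2))
        - ∫ s in p.1..b.1, ∫ t in p.2..b.2, partialSnd (partialFst f) (s, t) := by
    rw [← intervalIntegral.integral_sub (hedge_cont.intervalIntegrable _ _)
      (hinner_cont.intervalIntegrable _ _)]
    simp only [hinner, sub_sub_cancel]
  have hrow := integral_partialFst (hf.of_le one_le_two) p.1 b.1 p.2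
  have hcol := integral_partialSnd (hf.of_le one_le_two) b.1 p.2 b.2
  linarith

end PartialDerivatives

section Slices

variable {α β : Type*} [MeasurableSpace α] [MeasurableSpace β] {μ : Measure α} {ν : Measure β}
  {S : Set (α × β)} {g : β → ℝ}

theorem setIntegral_slice_eq_integral_indicator (hS : MeasurableSet S) (x : α) :
    ∫ y in Prod.mk x ⁻¹' S, g y ∂ν = ∫ y, S.indicator (fun q => g q.2) (x, y) ∂ν := by
  rw [← integral_indicator (measurable_prodMk_left hS)]
  rfl

theorem integrable_indicator_comp_snd [IsFiniteMeasure μ] [SFinite ν] (hS : MeasurableSet S)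
    (hg : Integrable g ν) : Integrable (S.indicator fun q => g q.2) (μ.prod ν) :=
  (hg.comp_snd μ).indicator hS

theorem integrable_setIntegral_slice [IsFiniteMeasure μ] [SFinite ν] (hS : MeasurableSet S)
    (hg : Integrable g ν) : Integrable (fun x => ∫ y in Prod.mk x ⁻¹' S, g y ∂ν) μ := by
  simp only [setIntegral_slice_eq_integral_indicator hS]
  exact (integrable_indicator_comp_snd hS hg).integral_prod_left

theorem integral_setIntegral_slice [IsFiniteMeasure μ] [SFinite ν] (hS : MeasurableSet S)
    (hg : Integrable g ν) :
    ∫ x, ∫ y in Prod.mk x ⁻¹' S, g y ∂ν ∂μ = ∫ y, μ.real ((·, y) ⁻¹' S) * g y ∂ν := by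
  simp only [setIntegral_slice_eq_integral_indicator hS]
  rw [integral_integral_swap (f := fun x y => S.indicator (fun q => g q.2) (x, y))
    (integrable_indicator_comp_snd hS hg)]
  refine integral_congr_ae (ae_of_all _ fun y => ?_)
  dsimp only
  rw [← smul_eq_mul, ← integral_indicator_const _ (measurable_prodMk_right hS)]
  rfl

end Slices

theorem Ici_inter_Icc_of_le {α : Type*} [Preorder α] {a b x : α} (hax : a ≤ x) :
    Ici x ∩ Icc a b = Icc x b := by
  ext z
  simp only [mem_inter_iff, mem_Ici, mem_Icc]
  exact ⟨fun h => ⟨h.1, h.2.2⟩, fun h => ⟨h.1, hax.trans h.1, h.2⟩⟩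

theorem setIntegral_Ici_restrict_Icc {g : ℝ → ℝ} {a b x : ℝ} (hax : a ≤ x) (hxb : x ≤ b) :
    ∫ s in Ici x, g s ∂volume.restrict (Icc a b) = ∫ s in x..b, g s := by
  rw [Measure.restrict_restrict measurableSet_Ici, Ici_inter_Icc_of_le hax,
    integral_Icc_eq_integral_Ioc, intervalIntegral.integral_of_le hxb]

theorem setIntegral_Ici_restrict_Icc_prod {g : ℝ × ℝ → ℝ} (hg : Continuous g) {a b p : ℝ × ℝ}
    (hap : a ≤ p) (hpb : p ≤ b) :
    ∫ z in Ici p, g z ∂volume.restrict (Icc a b) = ∫ s in p.1..b.1, ∫ t in p.2..b.2, g (s, t) := by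
  have hg' : IntegrableOn g (Icc p.1 b.1 ×ˢ Icc p.2 b.2) (volume.prod volume) := by
    rw [← Measure.volume_eq_prod, ← Icc_prod_eq]
    exact hg.integrableOn_Icc
  rw [Measure.restrict_restrict measurableSet_Ici, Ici_inter_Icc_of_le hap, Icc_prod_eq,
    Measure.volume_eq_prod, setIntegral_prod _ hg', integral_Icc_eq_integral_Ioc,
    intervalIntegral.integral_of_le hpb.1]
  refine setIntegral_congr_fun measurableSet_Ioc fun s _ => ?_
  rw [integral_Icc_eq_integral_Ioc, intervalIntegral.integral_of_le hpb.2]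

theorem apply_eq_corner_sub_setIntegral_Ici {f : ℝ × ℝ → ℝ} (hf : ContDiff ℝ 2 f)
    {a b p : ℝ × ℝ} (hp : p ∈ Icc a b) :
    f p = f b - (∫ s in Ici p.1, partialFst f (s, b.2) ∂volume.restrict (Icc a.1 b.1))
      - (∫ t in Ici p.2, partialSnd f (b.1, t) ∂volume.restrict (Icc a.2 b.2))
      + ∫ z in Ici p, partialSnd (partialFst f) z ∂volume.restrict (Icc a b) := by
  rw [setIntegral_Ici_restrict_Icc hp.1.1 hp.2.1, setIntegral_Ici_restrict_Icc hp.1.2 hp.2.2,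
    setIntegral_Ici_restrict_Icc_prod ((hf.partialFst (n := 1)).partialSnd (n := 0)).continuous
      hp.1 hp.2]
  exact apply_eq_corner_sub_integral_partials hf p b

section Support

variable {α β : Type*} [MeasurableSpace α] [MeasurableSpace β] [Preorder α] [Preorder β]
  {μ : Measure (α × β)}

theorem measureReal_fst_le_eq_measureReal_Iic {c : β} (hμ : ∀ᵐ p ∂μ, p.2 ≤ c) (s : α) :
    μ.real {p | p.1 ≤ s} = μ.real (Iic (s, c)) :=
  measureReal_congr (hμ.mono fun _ hp => propext ⟨fun h => ⟨h, hp⟩, fun h => h.1⟩)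

theorem measureReal_snd_le_eq_measureReal_Iic {c : α} (hμ : ∀ᵐ p ∂μ, p.1 ≤ c) (t : β) :
    μ.real {p | p.2 ≤ t} = μ.real (Iic (c, t)) :=
  measureReal_congr (hμ.mono fun _ hp => propext ⟨fun h => ⟨hp, h⟩, fun h => h.2⟩)

end Support

theorem integral_eq_corner_sub_add_integral_cdf {f : ℝ × ℝ → ℝ} (hf : ContDiff ℝ 2 f)
    (μ : Measure (ℝ × ℝ)) [IsFiniteMeasure μ] {a b : ℝ × ℝ} (hμ : ∀ᵐ p ∂μ, p ∈ Icc a b) :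
    ∫ p, f p ∂μ = μ.real univ * f b
      - (∫ s in Icc a.1 b.1, μ.real (Iic (s, b.2)) * partialFst f (s, b.2))
      - (∫ t in Icc a.2 b.2, μ.real (Iic (b.1, t)) * partialSnd f (b.1, t))
      + ∫ z in Icc a b, μ.real (Iic z) * partialSnd (partialFst f) z := by
  set A : ℝ → ℝ := fun s => partialFst f (s, b.2)
  set B : ℝ → ℝ := fun t => partialSnd f (b.1, t)
  set C : ℝ × ℝ → ℝ := partialSnd (partialFst f)
  have hA : Integrable A (volume.restrict (Icc a.1 b.1)) :=
    ((hf.partialFst (n := 1)).continuous.comp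
      (continuous_id.prodMk continuous_const)).integrableOn_Icc
  have hB : Integrable B (volume.restrict (Icc a.2 b.2)) :=
    ((hf.partialSnd (n := 1)).continuous.comp
      (continuous_const.prodMk continuous_id)).integrableOn_Icc
  have hC : Integrable C (volume.restrict (Icc a b)) :=
    ((hf.partialFst (n := 1)).partialSnd (n := 0)).continuous.integrableOn_Icc
  have hS₁ : MeasurableSet {q : (ℝ × ℝ) × ℝ | q.1.1 ≤ q.2} :=
    measurableSet_le measurable_fst.fst measurable_snd
  have hS₂ : MeasurableSet {q : (ℝ × ℝ) × ℝ | q.1.2 ≤ q.2} :=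
    measurableSet_le measurable_fst.snd measurable_snd
  have hS₃ : MeasurableSet {q : (ℝ × ℝ) × (ℝ × ℝ) | q.1 ≤ q.2} :=
    measurableSet_le measurable_fst measurable_snd
  set G₁ : ℝ × ℝ → ℝ := fun p => ∫ s in Ici p.1, A s ∂volume.restrict (Icc a.1 b.1)
  set G₂ : ℝ × ℝ → ℝ := fun p => ∫ t in Ici p.2, B t ∂volume.restrict (Icc a.2 b.2)
  set G₃ : ℝ × ℝ → ℝ := fun p => ∫ z in Ici p, C z ∂volume.restrict (Icc a b)
  -- The slices of the `hSᵢ` sets are the `Ici` above and `{p | p.1 ≤ s}`, ..., up to defeq.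
  have hG₁ : Integrable G₁ μ := integrable_setIntegral_slice hS₁ hA
  have hG₂ : Integrable G₂ μ := integrable_setIntegral_slice hS₂ hB
  have hG₃ : Integrable G₃ μ := integrable_setIntegral_slice hS₃ hC
  have hval₁ : ∫ p, G₁ p ∂μ = ∫ s in Icc a.1 b.1, μ.real {p | p.1 ≤ s} * A s :=
    integral_setIntegral_slice hS₁ hA
  have hval₂ : ∫ p, G₂ p ∂μ = ∫ t in Icc a.2 b.2, μ.real {p | p.2 ≤ t} * B t :=
    integral_setIntegral_slice hS₂ hB
  have hval₃ : ∫ p, G₃ p ∂μ = ∫ z in Icc a b, μ.real (Iic z) * C z :=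
    integral_setIntegral_slice hS₃ hC
  have hf_ae : (fun p => f p) =ᵐ[μ] (fun _ => f b) - G₁ - G₂ + G₃ :=
    hμ.mono fun _ hp => apply_eq_corner_sub_setIntegral_Ici hf hp
  rw [integral_congr_ae hf_ae, integral_add' ((integrable_const _).sub hG₁ |>.sub hG₂) hG₃,
    integral_sub' ((integrable_const _).sub hG₁) hG₂, integral_sub' (integrable_const _) hG₁,
    integral_const, smul_eq_mul, hval₁, hval₂, hval₃]
  simp only [measureReal_fst_le_eq_measureReal_Iic (hμ.mono fun _ hp => hp.2.2),
    measureReal_snd_le_eq_measureReal_Iic (hμ.mono fun _ hp => hp.2.1)]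
  rfl

theorem measurable_measureReal_Iic (μ : Measure (ℝ × ℝ)) [IsFiniteMeasure μ] :
    Measurable fun z : ℝ × ℝ => μ.real (Iic z) :=
  (measurable_measure_prodMk_left (ν := μ)
    (measurableSet_le measurable_snd measurable_fst :
      MeasurableSet {q : (ℝ × ℝ) × (ℝ × ℝ) | q.2 ≤ q.1})).ennreal_toReal

theorem setIntegral_measureReal_Iic_mul_mono {X : Type*} [MeasurableSpace X] {ν : Measure X}
    {s : Set X} (hs : MeasurableSet s) (μ₁ μ₂ : Measure (ℝ × ℝ)) [IsFiniteMeasure μ₁]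
    [IsFiniteMeasure μ₂] {e : X → ℝ × ℝ} (he : Measurable e) {g : X → ℝ}
    (hg : IntegrableOn g s ν) (hg₀ : ∀ x ∈ s, 0 ≤ g x)
    (hμ : ∀ x ∈ s, μ₁.real (Iic (e x)) ≤ μ₂.real (Iic (e x))) :
    ∫ x in s, μ₁.real (Iic (e x)) * g x ∂ν ≤ ∫ x in s, μ₂.real (Iic (e x)) * g x ∂ν := by
  have hint (μ : Measure (ℝ × ℝ)) [IsFiniteMeasure μ] :
      IntegrableOn (fun x => μ.real (Iic (e x)) * g x) s ν :=
    hg.bdd_mul ((measurable_measureReal_Iic μ).comp he).aestronglyMeasurable (c := μ.real univ)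
      (ae_of_all _ fun x => by
        rw [Real.norm_of_nonneg measureReal_nonneg]
        exact measureReal_mono (subset_univ _))
  exact setIntegral_mono_on (hint μ₁) (hint μ₂) hs fun x hx =>
    mul_le_mul_of_nonneg_right (hμ x hx) (hg₀ x hx)

theorem integral_le_integral_of_measureReal_Iic_le {f : ℝ × ℝ → ℝ} (hf : ContDiff ℝ 2 f)
    {μ₁ μ₂ : Measure (ℝ × ℝ)} [IsProbabilityMeasure μ₁] [IsProbabilityMeasure μ₂]
    {a b : ℝ × ℝ} (hab : a ≤ b) (h₁ : ∀ᵐ p ∂μ₁, p ∈ Icc a b) (h₂ : ∀ᵐ p ∂μ₂, p ∈ Icc a b)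
    (hμ : ∀ z ∈ Icc a b, μ₁.real (Iic z) ≤ μ₂.real (Iic z))
    (hfx : ∀ s ∈ Icc a.1 b.1, 0 ≤ partialFst f (s, b.2))
    (hfy : ∀ t ∈ Icc a.2 b.2, 0 ≤ partialSnd f (b.1, t))
    (hfxy : ∀ z ∈ Icc a b, partialSnd (partialFst f) z ≤ 0) :
    ∫ p, f p ∂μ₂ ≤ ∫ p, f p ∂μ₁ := by
  have hx := setIntegral_measureReal_Iic_mul_mono (ν := volume) measurableSet_Icc μ₁ μ₂
    (e := fun s => (s, b.2)) (by fun_prop) (g := fun s => partialFst f (s, b.2))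
    ((hf.partialFst (n := 1)).continuous.comp (continuous_id.prodMk continuous_const)
      |>.integrableOn_Icc) hfx fun s hs => hμ _ ⟨⟨hs.1, hab.2⟩, ⟨hs.2, le_rfl⟩⟩
  have hy := setIntegral_measureReal_Iic_mul_mono (ν := volume) measurableSet_Icc μ₁ μ₂
    (e := fun t => (b.1, t)) (by fun_prop) (g := fun t => partialSnd f (b.1, t))
    ((hf.partialSnd (n := 1)).continuous.comp (continuous_const.prodMk continuous_id)
      |>.integrableOn_Icc) hfy fun t ht => hμ _ ⟨⟨hab.1, ht.1⟩, ⟨le_rfl, ht.2⟩⟩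
  have hxy := setIntegral_measureReal_Iic_mul_mono (ν := volume) measurableSet_Icc μ₁ μ₂
    (e := id) measurable_id (g := fun z => -partialSnd (partialFst f) z)
    ((hf.partialFst (n := 1)).partialSnd (n := 0)).continuous.neg.integrableOn_Icc
    (fun z hz => neg_nonneg.2 (hfxy z hz)) hμ
  simp only [id, mul_neg, integral_neg, neg_le_neg_iff] at hxy
  rw [integral_eq_corner_sub_add_integral_cdf hf μ₁ h₁,
    integral_eq_corner_sub_add_integral_cdf hf μ₂ h₂, probReal_univ, probReal_univ]
  linarith

theorem first_order_dominance_submodular_absolutely_continuous_general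
    (μ₁ μ₂ : Measure (ℝ × ℝ)) [IsProbabilityMeasure μ₁] [IsProbabilityMeasure μ₂]
    (hs₁ : μ₁ (Icc ((0, 0) : ℝ × ℝ) (1, 1))ᶜ = 0)
    (hs₂ : μ₂ (Icc ((0, 0) : ℝ × ℝ) (1, 1))ᶜ = 0)
    (F₁ F₂ : ℝ → ℝ → ℝ)
    (hF₁ : ∀ s t : ℝ, F₁ s t = (μ₁ (Iic ((s, t) : ℝ × ℝ))).toReal)
    (hF₂ : ∀ s t : ℝ, F₂ s t = (μ₂ (Iic ((s, t) : ℝ × ℝ))).toReal)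
    (hle : ∀ s ∈ Icc (0 : ℝ) 1, ∀ t ∈ Icc (0 : ℝ) 1, F₁ s t ≤ F₂ s t)
    (φ : ℝ → ℝ → ℝ)
    (hφ : ContDiff ℝ 2 (fun p : ℝ × ℝ => φ p.1 p.2))
    (hφx : ∀ s ∈ Icc (0 : ℝ) 1, ∀ t ∈ Icc (0 : ℝ) 1,
      0 ≤ deriv (fun s' => φ s' t) s)
    (hφy : ∀ s ∈ Icc (0 : ℝ) 1, ∀ t ∈ Icc (0 : ℝ) 1,
      0 ≤ deriv (fun t' => φ s t') t)
    (hφxy : ∀ s ∈ Icc (0 : ℝ) 1, ∀ t ∈ Icc (0 : ℝ) 1,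
      deriv (fun t' => deriv (fun s' => φ s' t') s) t ≤ 0) :
    ∫ p, φ p.1 p.2 ∂μ₁ ≥ ∫ p, φ p.1 p.2 ∂μ₂ := by
  have hφ₁ := hφ.differentiable two_ne_zero
  have hone : (1 : ℝ) ∈ Icc (0 : ℝ) 1 := ⟨zero_le_one, le_rfl⟩
  refine integral_le_integral_of_measureReal_Iic_le hφ (a := (0, 0)) (b := (1, 1))
    (by norm_num [Prod.le_def]) (mem_ae_iff.2 hs₁) (mem_ae_iff.2 hs₂) ?_ ?_ ?_ ?_
  · rintro ⟨s, t⟩ ⟨⟨hs0, ht0⟩, ⟨hs1, ht1⟩⟩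
    simpa only [hF₁, hF₂, measureReal_def] using hle s ⟨hs0, hs1⟩ t ⟨ht0, ht1⟩
  · intro s hs
    rw [partialFst_eq_deriv (hφ₁ _)]
    exact hφx s hs 1 hone
  · intro t ht
    rw [partialSnd_eq_deriv (hφ₁ _)]
    exact hφy 1 hone t ht
  · rintro ⟨s, t⟩ ⟨⟨hs0, ht0⟩, ⟨hs1, ht1⟩⟩
    rw [partialSnd_partialFst_eq_deriv_deriv hφ]
    exact hφxy s ⟨hs0, hs1⟩ t ⟨ht0, ht1⟩

theorem first_order_dominance_submodular_absolutely_continuous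
    (μ₁ μ₂ : Measure (ℝ × ℝ)) [IsProbabilityMeasure μ₁] [IsProbabilityMeasure μ₂]
    (hac₁ : μ₁ ≪ volume) (hac₂ : μ₂ ≪ volume)
    (hs₁ : μ₁ (Icc ((0, 0) : ℝ × ℝ) (1, 1))ᶜ = 0)
    (hs₂ : μ₂ (Icc ((0, 0) : ℝ × ℝ) (1, 1))ᶜ = 0)
    (F₁ F₂ : ℝ → ℝ → ℝ)
    (hF₁ : ∀ s t : ℝ, F₁ s t = (μ₁ (Iic ((s, t) : ℝ × ℝ))).toReal)
    (hF₂ : ∀ s t : ℝ, F₂ s t = (μ₂ (Iic ((s, t) : ℝ × ℝ))).toReal)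
    (hF₁c : ContDiff ℝ 1 (fun p : ℝ × ℝ => F₁ p.1 p.2))
    (hF₂c : ContDiff ℝ 1 (fun p : ℝ × ℝ => F₂ p.1 p.2))
    (hle : ∀ s ∈ Icc (0 : ℝ) 1, ∀ t ∈ Icc (0 : ℝ) 1, F₁ s t ≤ F₂ s t)
    (φ : ℝ → ℝ → ℝ)
    (hφ : ContDiff ℝ 2 (fun p : ℝ × ℝ => φ p.1 p.2))
    (hφx : ∀ s ∈ Icc (0 : ℝ) 1, ∀ t ∈ Icc (0 : ℝ) 1,
      0 ≤ deriv (fun s' => φ s' t) s)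
    (hφy : ∀ s ∈ Icc (0 : ℝ) 1, ∀ t ∈ Icc (0 : ℝ) 1,
      0 ≤ deriv (fun t' => φ s t') t)
    (hφxy : ∀ s ∈ Icc (0 : ℝ) 1, ∀ t ∈ Icc (0 : ℝ) 1,
      deriv (fun t' => deriv (fun s' => φ s' t') s) t ≤ 0) :
    ∫ p, φ p.1 p.2 ∂μ₁ ≥ ∫ p, φ p.1 p.2 ∂μ₂ :=
  first_order_dominance_submodular_absolutely_continuous_general μ₁ μ₂ hs₁ hs₂ F₁ F₂ hF₁ hF₂ hle φ
    hφ hφx hφy hφxy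
end
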